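/- Let n ≥ 1, r ∈ ℕ with r ≥ 1, γ ∈ (0,1/2), and let D_ω be a dyadic grid on ℝ^n. Let I, J ∈ D_ω and let K ∈ D_ω be good (with parameters r, γ), with ℓ(K) ≤ ℓ(I) = 2ℓ(J). If max{d(K,I), d(K,J)} > 2 ℓ(K)^γ ℓ(J)^{1−γ}, then there exist a cube Q ∈ D_ω and a constant c > 0 depending only on n, γ and r such that I ∪ J ∪ K ⊂ Q and max{d(K,I), d(K,J)} ≥ c ℓ(K)^γ ℓ(Q)^{1−γ}. -/

import Mathlib

/-!
Let `D = max {d(K, I), d(K, J)}` and take the least `s ≥ r` with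
`D ≤ 2 ℓ(K)^γ (2^s ℓ(I))^{1-γ}`; let `Q` be the ancestor of `I` with `ℓ(Q) = 2^s ℓ(I)`.
As `ℓ(Q) ≥ 2^r ℓ(K)`, goodness of `K` gives `d(K, ∂Q) > D`. Dyadic cubes are nested or
disjoint, and a segment from inside `Q` to outside crosses `∂Q`, so a cube on the other side
of `∂Q` from `K` is at distance at least `d(K, ∂Q)` from it. Hence `K ⊆ Q` because `I ⊆ Q`,
and then `J ⊆ Q`. Since `ℓ^{1-γ}` at most doubles when `ℓ` doubles, minimality of `s`
(or `s = r` together with the hypothesis) gives `ℓ(K)^γ ℓ(Q)^{1-γ} ≤ 2^r D`.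
-/

open MeasureTheory Set
open scoped ENNReal NNReal

noncomputable section

abbrev Rn (n : ℕ) := Fin n → ℝ

/-- A (half-open, axis-parallel) cube in `ℝⁿ` (with the `ℓ^∞` metric),
given by its lower-left corner and its (positive) sidelength. -/
structure Cube (n : ℕ) where
  corner : Fin n → ℝ
  len : ℝ
  len_pos : 0 < len

namespace Cube

/-- The underlying set `∏_i [aᵢ, aᵢ + ℓ)` of a cube. -/
def toSet {n : ℕ} (I : Cube n) : Set (Rn n) :=
  {x | ∀ i, I.corner i ≤ x i ∧ x i < I.corner i + I.len}

/-- The center of a cube. -/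
def center {n : ℕ} (I : Cube n) : Rn n := fun i => I.corner i + I.len / 2

/-- `λI`: the cube with the same center and sidelength `λ ℓ(I)`. -/
def dilate {n : ℕ} (I : Cube n) (lam : ℝ) (hlam : 0 < lam) : Cube n :=
  ⟨fun i => I.center i - lam * I.len / 2, lam * I.len, mul_pos hlam I.len_pos⟩

end Cube

/-- The unit cube `𝕀 = [-1/2, 1/2)^n`. -/
def unitCube (n : ℕ) : Cube n := ⟨fun _ => -(1 / 2 : ℝ), 1, one_pos⟩

/-- The distance `d(E, F) = inf {|x - y| : x ∈ E, y ∈ F}` between two sets. -/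
def sDist {α : Type*} [PseudoMetricSpace α] (E F : Set α) : ℝ :=
  sInf ((fun q : α × α => dist q.1 q.2) '' (E ×ˢ F))

/-- The relative distance `rd(I, J) = d(I, J) / max{ℓ(I), ℓ(J)}` between two cubes. -/
def relDist {n : ℕ} (I J : Cube n) : ℝ :=
  sDist I.toSet J.toSet / max I.len J.len

/-- The cube `2^{-k}([0,1)^n + m) + Σ_{j > k} 2^{-j} ω^j` of the random dyadic grid `D_ω`. -/
def gridCube (n : ℕ) (ω : ℤ → Rn n) (k : ℤ) (m : Fin n → ℤ) : Cube n :=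
  ⟨fun i => (2 : ℝ) ^ (-k) * (m i : ℝ) + ∑' j : {j : ℤ // k < j}, (2 : ℝ) ^ (-j.1) * ω j.1 i,
   (2 : ℝ) ^ (-k), by positivity⟩

/-- Membership in the dyadic grid `D_ω`. -/
def memGrid {n : ℕ} (ω : ℤ → Rn n) (I : Cube n) : Prop :=
  ∃ (k : ℤ) (m : Fin n → ℤ), I = gridCube n ω k m

/-- `ω` is an admissible dyadic-grid parameter: `ω^j ∈ {0,1}^n` for all `j ∈ ℤ`. -/
def IsGridParam {n : ℕ} (ω : ℤ → Rn n) : Prop :=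
  ∀ (j : ℤ) (i : Fin n), ω j i = 0 ∨ ω j i = 1

/-- `K ∈ D_ω` is good (with parameters `r`, `γ`) if every `J ∈ D_ω` with
`ℓ(J) ≥ 2^r ℓ(K)` satisfies `d(K, ∂J) > 2 ℓ(K)^γ ℓ(J)^{1-γ}`. -/
def IsGoodCube {n : ℕ} (ω : ℤ → Rn n) (r : ℕ) (γ : ℝ) (K : Cube n) : Prop :=
  ∀ J : Cube n, memGrid ω J → (2 : ℝ) ^ r * K.len ≤ J.len →
    2 * K.len ^ γ * J.len ^ (1 - γ) < sDist K.toSet (frontier J.toSet)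

section DyadicGrid

variable {n : ℕ} {ω : ℤ → Rn n} {I J : Cube n}

def gridShift (ω : ℤ → Rn n) (k : ℤ) (i : Fin n) : ℝ :=
  ∑' j : {j : ℤ // k < j}, (2 : ℝ) ^ (-j.1) * ω j.1 i

theorem IsGridParam.exists_int_eq (hω : IsGridParam ω) (j : ℤ) (i : Fin n) :
    ∃ b : ℤ, (b : ℝ) = ω j i := by
  rcases hω j i with h | h
  exacts [⟨0, by simp [h]⟩, ⟨1, by simp [h]⟩]

theorem summable_zpow_two_neg_Ioi (k : ℤ) :
    Summable (fun j : Ioi k => (2 : ℝ) ^ (-j.1)) := by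
  have hinj : Function.Injective (fun j : Ioi k => (j.1 - k).toNat) := by
    intro a b h
    have ha : k < a.1 := a.2
    have hb : k < b.1 := b.2
    simp only at h
    ext
    omega
  refine ((summable_geometric_two.mul_left ((2 : ℝ) ^ (-k))).comp_injective hinj).congr
    fun j => ?_
  have hj : k < j.1 := j.2
  rw [Function.comp_apply, one_div, inv_pow, ← zpow_natCast, Int.toNat_of_nonneg (by omega),
    ← zpow_neg, ← zpow_add₀ two_ne_zero]
  ring_nf

theorem IsGridParam.summable_indicator_Ioi (hω : IsGridParam ω) (k : ℤ) (i : Fin n) :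
    Summable ((Ioi k).indicator fun j => (2 : ℝ) ^ (-j) * ω j i) := by
  refine summable_subtype_iff_indicator.1 <|
    (summable_zpow_two_neg_Ioi k).of_nonneg_of_le (fun j => ?_) fun j => ?_ <;>
  rcases hω j.1 i with h | h <;> simp [h, zpow_nonneg]

theorem IsGridParam.gridShift_eq_add (hω : IsGridParam ω) (k : ℤ) (i : Fin n) :
    gridShift ω k i = (2 : ℝ) ^ (-(k + 1)) * ω (k + 1) i + gridShift ω (k + 1) i := by
  classical
  set f : ℤ → ℝ := fun j => (2 : ℝ) ^ (-j) * ω j i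
  have hsplit :
      (Ioi k).indicator f = Pi.single (k + 1) (f (k + 1)) + (Ioi (k + 1)).indicator f := by
    ext j
    rcases lt_trichotomy j (k + 1) with h | rfl | h
    · simp [indicator, h.ne, show ¬ k < j by omega, show ¬ k + 1 < j by omega]
    · simp [indicator]
    · simp [indicator, h.ne', h, show k < j by omega]
  have hk : gridShift ω k i = ∑' j, (Ioi k).indicator f j := tsum_subtype (Ioi k) f
  have hk1 : gridShift ω (k + 1) i = ∑' j, (Ioi (k + 1)).indicator f j := tsum_subtype _ f
  simp only [hk, hk1, hsplit, Pi.add_apply]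
  rw [Summable.tsum_add (summable_of_ne_finset_zero (s := {k + 1}) (by simp_all [Pi.single_apply]))
    (hω.summable_indicator_Ioi (k + 1) i), tsum_pi_single]

def gridIndex (ω : ℤ → Rn n) (k : ℤ) (x : Rn n) : Fin n → ℤ :=
  fun i => ⌊(2 : ℝ) ^ k * (x i - gridShift ω k i)⌋

theorem mem_gridCube_iff {k : ℤ} {m : Fin n → ℤ} {x : Rn n} :
    x ∈ (gridCube n ω k m).toSet ↔ gridIndex ω k x = m := by
  have h2k : (0 : ℝ) < 2 ^ k := zpow_pos two_pos k
  have hinv : (2 : ℝ) ^ (-k) = ((2 : ℝ) ^ k)⁻¹ := zpow_neg 2 k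
  simp only [Cube.toSet, gridCube, mem_ofPred_eq, funext_iff, gridIndex, Int.floor_eq_iff]
  refine forall_congr' fun i => and_congr ?_ ?_
  · rw [hinv, ← le_sub_iff_add_le, inv_mul_le_iff₀ h2k]
    rfl
  · rw [hinv, add_right_comm, ← mul_add_one, ← sub_lt_iff_lt_add, lt_inv_mul_iff₀ h2k]
    rfl

theorem IsGridParam.exists_gridIndex_eq_ediv (hω : IsGridParam ω) (k : ℤ) (i : Fin n) :
    ∃ b : ℤ, ∀ x, gridIndex ω k x i = (gridIndex ω (k + 1) x i - b) / 2 := by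
  obtain ⟨b, hb⟩ := hω.exists_int_eq (k + 1) i
  refine ⟨b, fun x => ?_⟩
  have h : (2 : ℝ) ^ k * (x i - gridShift ω k i)
      = ((2 : ℝ) ^ (k + 1) * (x i - gridShift ω (k + 1) i) - b) / (2 : ℕ) := by
    rw [hω.gridShift_eq_add, hb, zpow_add_one₀ two_ne_zero, zpow_neg, zpow_add_one₀ two_ne_zero]
    field_simp
    ring
  rw [gridIndex, gridIndex, h, Int.floor_div_natCast, Int.floor_sub_intCast]
  rfl

theorem IsGridParam.gridIndex_eq_of_le (hω : IsGridParam ω) {k' k : ℤ} (hk : k' ≤ k) {x y : Rn n}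
    (h : gridIndex ω k x = gridIndex ω k y) : gridIndex ω k' x = gridIndex ω k' y := by
  induction k', hk using Int.leInductionDown with
  | base => exact h
  | pred k' _ ih =>
    funext i
    obtain ⟨b, hb⟩ := hω.exists_gridIndex_eq_ediv (k' - 1) i
    rw [hb, hb, sub_add_cancel, ih]

theorem Cube.corner_mem_toSet (Q : Cube n) : Q.corner ∈ Q.toSet :=
  fun _ => ⟨le_rfl, lt_add_of_pos_right _ Q.len_pos⟩

theorem Cube.toSet_nonempty (Q : Cube n) : Q.toSet.Nonempty :=
  ⟨_, Q.corner_mem_toSet⟩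

theorem memGrid.subset_or_disjoint (hI : memGrid ω I) (hJ : memGrid ω J) (hω : IsGridParam ω)
    (h : I.len ≤ J.len) : I.toSet ⊆ J.toSet ∨ Disjoint I.toSet J.toSet := by
  obtain ⟨k, m, rfl⟩ := hI
  obtain ⟨k', m', rfl⟩ := hJ
  have hk : k' ≤ k := by
    have := (zpow_le_zpow_iff_right₀ (a := (2 : ℝ)) one_lt_two).1 h
    omega
  refine or_iff_not_imp_right.2 fun hne y hy => ?_
  obtain ⟨x, hxI, hxJ⟩ := not_disjoint_iff.1 hne
  rw [mem_gridCube_iff] at hxI hxJ hy ⊢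
  rw [← hxJ]
  exact hω.gridIndex_eq_of_le hk (hy.trans hxI.symm)

theorem memGrid.exists_superset (hI : memGrid ω I) (hω : IsGridParam ω) (s : ℕ) :
    ∃ Q : Cube n, memGrid ω Q ∧ Q.len = 2 ^ s * I.len ∧ I.toSet ⊆ Q.toSet := by
  obtain ⟨k, m, rfl⟩ := hI
  set I := gridCube n ω k m
  set Q := gridCube n ω (k - s) (gridIndex ω (k - s) I.corner)
  have hlen : Q.len = 2 ^ s * I.len := by
    change (2 : ℝ) ^ (-(k - s)) = 2 ^ s * 2 ^ (-k)
    rw [← zpow_natCast, ← zpow_add₀ two_ne_zero, neg_sub, sub_eq_add_neg]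
  have hcorner : I.corner ∈ Q.toSet := mem_gridCube_iff.2 rfl
  refine ⟨Q, ⟨_, _, rfl⟩, hlen, ?_⟩
  refine (memGrid.subset_or_disjoint ⟨k, m, rfl⟩ ⟨_, _, rfl⟩ hω ?_).resolve_right
    (not_disjoint_iff.2 ⟨_, I.corner_mem_toSet, hcorner⟩)
  rw [hlen]
  exact le_mul_of_one_le_left I.len_pos.le (one_le_pow₀ one_le_two)

end DyadicGrid

theorem IsPreconnected.inter_frontier_nonempty {X : Type*} [TopologicalSpace X] {s t : Set X}
    (ht : IsPreconnected t) (hin : (t ∩ s).Nonempty) (hout : (t \ s).Nonempty) :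
    (t ∩ frontier s).Nonempty := by
  have := isPreconnected_iff_preconnectedSpace.1 ht
  obtain ⟨x, hxt, hxs⟩ := hin
  obtain ⟨y, hyt, hys⟩ := hout
  obtain ⟨z, hz⟩ := (nonempty_frontier_iff (s := ((↑) : t → X) ⁻¹' s)).2
    ⟨⟨⟨x, hxt⟩, hxs⟩, (ne_univ_iff_exists_notMem _).2 ⟨⟨y, hyt⟩, hys⟩⟩
  exact ⟨z, z.2, continuous_subtype_val.frontier_preimage_subset s hz⟩

section sDist

variable {V : Type*} {E F : Set V}

theorem sDist_le_dist [PseudoMetricSpace V] {x y : V} (hx : x ∈ E) (hy : y ∈ F) :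
    sDist E F ≤ dist x y :=
  csInf_le ⟨0, by rintro _ ⟨_, _, rfl⟩; exact dist_nonneg⟩ ⟨(x, y), ⟨hx, hy⟩, rfl⟩

theorem le_sDist [PseudoMetricSpace V] (hE : E.Nonempty) (hF : F.Nonempty) {c : ℝ}
    (h : ∀ x ∈ E, ∀ y ∈ F, c ≤ dist x y) : c ≤ sDist E F :=
  le_csInf ((hE.prod hF).image _) (by rintro _ ⟨⟨x, y⟩, ⟨hx, hy⟩, rfl⟩; exact h x hx y hy)

variable [SeminormedAddCommGroup V] [NormedSpace ℝ V] {s : Set V}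

theorem exists_mem_frontier_dist_le {x y : V} (h : x ∈ s ↔ y ∉ s) :
    ∃ z ∈ frontier s, dist x z ≤ dist x y := by
  have hseg := (convex_segment x y).isPreconnected
  have hx := left_mem_segment ℝ x y
  have hy := right_mem_segment ℝ x y
  obtain ⟨z, hz, hzs⟩ : (segment ℝ x y ∩ frontier s).Nonempty := by
    by_cases hxs : x ∈ s
    · exact hseg.inter_frontier_nonempty ⟨x, hx, hxs⟩ ⟨y, hy, h.1 hxs⟩
    · exact hseg.inter_frontier_nonempty ⟨y, hy, not_not.1 (mt h.2 hxs)⟩ ⟨x, hx, hxs⟩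
  exact ⟨z, hzs, (dist_add_dist_of_mem_segment hz) ▸ le_add_of_nonneg_right dist_nonneg⟩

theorem sDist_frontier_le_sDist (hE : E.Nonempty) (hF : F.Nonempty)
    (hsep : ∀ x ∈ E, ∀ y ∈ F, (x ∈ s ↔ y ∉ s)) : sDist E (frontier s) ≤ sDist E F :=
  le_sDist hE hF fun x hx y hy =>
    let ⟨_, hz, hxz⟩ := exists_mem_frontier_dist_le (hsep x hx y hy)
    (sDist_le_dist hx hz).trans hxz

theorem subset_iff_subset_of_sDist_lt (hE : E.Nonempty) (hF : F.Nonempty)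
    (hEs : E ⊆ s ∨ Disjoint E s) (hFs : F ⊆ s ∨ Disjoint F s)
    (h : sDist E F < sDist E (frontier s)) : E ⊆ s ↔ F ⊆ s := by
  have not_subset {G : Set V} (hG : G.Nonempty) (hGs : Disjoint G s) : ¬G ⊆ s :=
    fun hsub => hG.ne_empty (hGs.eq_bot_of_le hsub)
  rcases hEs with hEs | hEs <;> rcases hFs with hFs | hFs
  · exact iff_of_true hEs hFs
  · refine absurd h (sDist_frontier_le_sDist hE hF fun x hx y hy => ?_).not_gt
    exact iff_of_true (hEs hx) (disjoint_left.1 hFs hy)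
  · refine absurd h (sDist_frontier_le_sDist hE hF fun x hx y hy => ?_).not_gt
    exact iff_of_false (disjoint_left.1 hEs hx) (not_not.2 (hFs hy))
  · exact iff_of_false (not_subset hE hEs) (not_subset hF hFs)

end sDist

open Filter

theorem exists_min_ge_of_tendsto_atTop {α : Type*} [LinearOrder α] {u : ℕ → α}
    (hu : Tendsto u atTop atTop) (r : ℕ) (D : α) :
    ∃ s, r ≤ s ∧ D ≤ u s ∧ ∀ t, r ≤ t → t < s → u t < D := by
  classical
  have hex : ∃ s, r ≤ s ∧ D ≤ u s :=
    ((eventually_ge_atTop r).and (hu.eventually_ge_atTop D)).exists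
  exact ⟨Nat.find hex, (Nat.find_spec hex).1, (Nat.find_spec hex).2,
    fun t hrt hts => not_le.1 fun hDt => Nat.find_min hex hts ⟨hrt, hDt⟩⟩

theorem mul_rpow_le_of_one_le {t x β : ℝ} (ht : 1 ≤ t) (hx : 0 ≤ x) (hβ1 : β ≤ 1) :
    (t * x) ^ β ≤ t * x ^ β := by
  rw [Real.mul_rpow (by linarith) hx]
  gcongr
  exact (Real.rpow_le_rpow_of_exponent_le ht hβ1).trans_eq (Real.rpow_one t)

theorem exists_scale_of_lt {a L D β : ℝ} (ha : 0 < a) (hL : 0 < L) (hβ0 : 0 < β) (hβ1 : β ≤ 1)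
    (r : ℕ) (hD : 2 * a * L ^ β < D) :
    ∃ s : ℕ, r ≤ s ∧ D ≤ 2 * a * (2 ^ s * (2 * L)) ^ β ∧
      (2 ^ r)⁻¹ * a * (2 ^ s * (2 * L)) ^ β ≤ D := by
  set u : ℕ → ℝ := fun s => 2 * a * (2 ^ s * (2 * L)) ^ β
  have hu : Tendsto u atTop atTop :=
    ((tendsto_rpow_atTop hβ0).comp ((tendsto_pow_atTop_atTop_of_one_lt one_lt_two).atTop_mul_const
      (by positivity))).const_mul_atTop (by positivity)
  have hD0 : 0 < D := lt_of_le_of_lt (by positivity) hD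
  obtain ⟨s, hrs, hDs, hmin⟩ := exists_min_ge_of_tendsto_atTop hu r D
  refine ⟨s, hrs, hDs, ?_⟩
  suffices u s ≤ 2 ^ (r + 1) * D by
    have hus : (2 ^ r)⁻¹ * a * (2 ^ s * (2 * L)) ^ β = (2 ^ (r + 1))⁻¹ * u s := by
      simp only [u, pow_succ]
      field_simp
    rwa [hus, inv_mul_le_iff₀ (by positivity)]
  rcases hrs.eq_or_lt with rfl | hlt
  · calc u r = 2 * a * (2 ^ (r + 1) * L) ^ β := by simp only [u, pow_succ, mul_assoc]
      _ ≤ 2 * a * (2 ^ (r + 1) * L ^ β) := by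
        gcongr
        exact mul_rpow_le_of_one_le (one_le_pow₀ one_le_two) hL.le hβ1
      _ = 2 ^ (r + 1) * (2 * a * L ^ β) := by ring
      _ ≤ 2 ^ (r + 1) * D := by gcongr
  · obtain ⟨t, rfl⟩ : ∃ t, s = t + 1 := ⟨s - 1, by omega⟩
    calc u (t + 1) = 2 * a * (2 * (2 ^ t * (2 * L))) ^ β := by simp only [u, pow_succ]; ring_nf
      _ ≤ 2 * a * (2 * (2 ^ t * (2 * L)) ^ β) := by
        gcongr
        exact mul_rpow_le_of_one_le one_le_two (by positivity) hβ1
      _ = 2 * u t := by ring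
      _ ≤ 2 * D := by gcongr; exact (hmin t (by omega) (by omega)).le
      _ ≤ 2 ^ (r + 1) * D := by
        gcongr
        exact le_self_pow₀ one_le_two (by omega)

theorem common_ancestor_separated_general
    (n : ℕ) (r : ℕ) (γ : ℝ) (hγ0 : 0 < γ) (hγ1 : γ < 1 / 2) :
    ∃ c : ℝ, 0 < c ∧
      ∀ (ω : ℤ → Rn n), IsGridParam ω →
        ∀ I J K : Cube n, memGrid ω I → memGrid ω J → memGrid ω K →
          IsGoodCube ω r γ K →
          K.len ≤ I.len → I.len = 2 * J.len →
          2 * K.len ^ γ * J.len ^ (1 - γ) <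
            max (sDist K.toSet I.toSet) (sDist K.toSet J.toSet) →
          ∃ Q : Cube n, memGrid ω Q ∧ I.toSet ∪ J.toSet ∪ K.toSet ⊆ Q.toSet ∧
            c * K.len ^ γ * Q.len ^ (1 - γ) ≤
              max (sDist K.toSet I.toSet) (sDist K.toSet J.toSet) := by
  refine ⟨(2 ^ r)⁻¹, by positivity, fun ω hω I J K hI hJ hK hgood hKI hIJ hD => ?_⟩
  set D := max (sDist K.toSet I.toSet) (sDist K.toSet J.toSet)
  obtain ⟨s, hrs, hDs, hcD⟩ := exists_scale_of_lt (Real.rpow_pos_of_pos K.len_pos γ) J.len_pos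
    (by linarith) (by linarith) r hD
  obtain ⟨Q, hQ, hQlen, hIQ⟩ := hI.exists_superset hω s
  rw [← hIJ, ← hQlen] at hDs hcD
  have hIQlen : I.len ≤ Q.len :=
    hQlen ▸ le_mul_of_one_le_left I.len_pos.le (one_le_pow₀ one_le_two)
  have hKQlen : 2 ^ r * K.len ≤ Q.len := hQlen ▸ mul_le_mul (pow_le_pow_right₀ one_le_two hrs) hKI
    K.len_pos.le (by positivity)
  have hDQ : D < sDist K.toSet (frontier Q.toSet) := hDs.trans_lt (hgood Q hQ hKQlen)
  have hKQ : K.toSet ⊆ Q.toSet :=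
    (subset_iff_subset_of_sDist_lt K.toSet_nonempty I.toSet_nonempty
      (hK.subset_or_disjoint hQ hω (hKI.trans hIQlen)) (Or.inl hIQ)
      ((le_max_left _ _).trans_lt hDQ)).2 hIQ
  have hJQ : J.toSet ⊆ Q.toSet :=
    (subset_iff_subset_of_sDist_lt K.toSet_nonempty J.toSet_nonempty (Or.inl hKQ)
      (hJ.subset_or_disjoint hQ hω (by linarith [J.len_pos]))
      ((le_max_right _ _).trans_lt hDQ)).1 hKQ
  exact ⟨Q, hQ, union_subset (union_subset hIQ hJQ) hKQ, hcD⟩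

/-- common dyadic ancestor in the separated case. -/
theorem common_ancestor_separated
    (n : ℕ) (hn : 1 ≤ n) (r : ℕ) (hr : 1 ≤ r) (γ : ℝ) (hγ0 : 0 < γ) (hγ1 : γ < 1 / 2) :
    ∃ c : ℝ, 0 < c ∧
      ∀ (ω : ℤ → Rn n), IsGridParam ω →
        ∀ I J K : Cube n, memGrid ω I → memGrid ω J → memGrid ω K →
          IsGoodCube ω r γ K →
          K.len ≤ I.len → I.len = 2 * J.len →
          2 * K.len ^ γ * J.len ^ (1 - γ) <
            max (sDist K.toSet I.toSet) (sDist K.toSet J.toSet) →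
          ∃ Q : Cube n, memGrid ω Q ∧ I.toSet ∪ J.toSet ∪ K.toSet ⊆ Q.toSet ∧
            c * K.len ^ γ * Q.len ^ (1 - γ) ≤
              max (sDist K.toSet I.toSet) (sDist K.toSet J.toSet) :=
  common_ancestor_separated_general n r γ hγ0 hγ1
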